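/- Let α > 0, q = α/(1+α), and p ∈ (q, 1). Suppose (b_{n,m}) are nonnegative reals with b_{n,m} = 0 whenever m > αn, and suppose f : ℕ → ℝ≥0 satisfies Σ_{m ≤ αn} b_{n,m} q^m (1-q)^n ≤ f(n) for all n. Then Σ_{m ≤ αn} b_{n,m} p^m (1-p)^n ≤ ((1+α)^{1+α}/α^α · p^α (1-p))^n · f(n) for every n. -/

import Mathlib

/-!
Write `q = α/(1+α)`. Since `m ≤ αn` and `p/q ≥ 1`, each term satisfies
`p^m (1-p)^n = (p/q)^m (1-p)^n/(1-q)^n · q^m (1-q)^n ≤ ((p/q)^α (1-p)/(1-q))^n · q^m (1-q)^n`,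
and `(p/q)^α (1-p)/(1-q)` is exactly `(1+α)^(1+α)/α^α · p^α (1-p)`.
-/

open Finset

lemma Real.pow_le_rpow_pow_of_le_mul {x a : ℝ} {m n : ℕ} (hx : 1 ≤ x) (h : (m : ℝ) ≤ a * n) :
    x ^ m ≤ (x ^ a) ^ n := by
  rw [← Real.rpow_mul_natCast (by linarith), ← Real.rpow_natCast]
  exact Real.rpow_le_rpow_of_exponent_le hx h

lemma pow_mul_one_sub_pow_le {p q a : ℝ} {m n : ℕ} (hq : 0 < q) (hqp : q ≤ p) (hq1 : q < 1)
    (hp1 : p ≤ 1) (hm : (m : ℝ) ≤ a * n) :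
    p ^ m * (1 - p) ^ n ≤ ((p / q) ^ a * ((1 - p) / (1 - q))) ^ n * (q ^ m * (1 - q) ^ n) := by
  have h1q : (1 - q) ^ n ≠ 0 := pow_ne_zero _ (by linarith)
  calc p ^ m * (1 - p) ^ n
      = (p / q) ^ m * q ^ m * (((1 - p) / (1 - q)) ^ n * (1 - q) ^ n) := by
        rw [div_pow, div_pow, div_mul_cancel₀ _ (pow_ne_zero _ hq.ne'), div_mul_cancel₀ _ h1q]
    _ ≤ ((p / q) ^ a) ^ n * q ^ m * (((1 - p) / (1 - q)) ^ n * (1 - q) ^ n) := by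
        have : 0 ≤ 1 - p := by linarith
        gcongr
        exact Real.pow_le_rpow_pow_of_le_mul ((one_le_div hq).mpr hqp) hm
    _ = ((p / q) ^ a * ((1 - p) / (1 - q))) ^ n * (q ^ m * (1 - q) ^ n) := by
        rw [mul_pow]; ring

lemma sum_mul_pow_mul_one_sub_pow_le {p q a : ℝ} {n : ℕ} {s : Finset ℕ} {b : ℕ → ℝ}
    (hq : 0 < q) (hqp : q ≤ p) (hq1 : q < 1) (hp1 : p ≤ 1)
    (hs : ∀ m ∈ s, (m : ℝ) ≤ a * n) (hb : ∀ m ∈ s, 0 ≤ b m) :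
    ∑ m ∈ s, b m * p ^ m * (1 - p) ^ n ≤
      ((p / q) ^ a * ((1 - p) / (1 - q))) ^ n * ∑ m ∈ s, b m * q ^ m * (1 - q) ^ n := by
  rw [mul_sum]
  refine sum_le_sum fun m hm => ?_
  calc b m * p ^ m * (1 - p) ^ n = b m * (p ^ m * (1 - p) ^ n) := by ring
    _ ≤ b m * (((p / q) ^ a * ((1 - p) / (1 - q))) ^ n * (q ^ m * (1 - q) ^ n)) :=
        mul_le_mul_of_nonneg_left (pow_mul_one_sub_pow_le hq hqp hq1 hp1 (hs m hm)) (hb m hm)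
    _ = _ := by ring

lemma peierls_factor_eq {α p : ℝ} (hα : 0 < α) (hp : 0 ≤ p) :
    (1 + α) ^ (1 + α) / α ^ α * (p ^ α * (1 - p)) =
      (p / (α / (1 + α))) ^ α * ((1 - p) / (1 - α / (1 + α))) := by
  have h1α : 0 < 1 + α := by linarith
  have : (0 : ℝ) < α ^ α := Real.rpow_pos_of_pos hα α
  have : (0 : ℝ) < (1 + α) ^ α := Real.rpow_pos_of_pos h1α α
  rw [Real.div_rpow hp (div_pos hα h1α).le, Real.div_rpow hα.le h1α.le, Real.rpow_add h1α,
    Real.rpow_one, show (1 : ℝ) - α / (1 + α) = 1 / (1 + α) by field_simp; ring]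
  field_simp

open Finset in
theorem peierls_estimate_general (α : ℝ) (hα : 0 < α) (p : ℝ)
    (hq : α / (1 + α) < p) (hp : p < 1)
    (b : ℕ → ℕ → ℝ) (hb : ∀ n m, 0 ≤ b n m)
    (f : ℕ → ℝ)
    (hsum : ∀ n : ℕ,
      ∑ m ∈ Finset.range (Nat.floor (α * n) + 1),
        b n m * (α / (1 + α)) ^ m * (1 - α / (1 + α)) ^ n ≤ f n) :
    ∀ n : ℕ,
      ∑ m ∈ Finset.range (Nat.floor (α * n) + 1), b n m * p ^ m * (1 - p) ^ n ≤
        ((1 + α) ^ (1 + α) / α ^ α * (p ^ α * (1 - p))) ^ n * f n := by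
  intro n
  have hq0 : 0 < α / (1 + α) := div_pos hα (by linarith)
  have hq1 : α / (1 + α) < 1 := (div_lt_one (by linarith)).mpr (by linarith)
  have hrange : ∀ m ∈ range (⌊α * n⌋₊ + 1), (m : ℝ) ≤ α * n := fun m hm =>
    (Nat.le_floor_iff (by positivity)).mp (Nat.lt_succ_iff.mp (mem_range.mp hm))
  have hp0 : 0 ≤ p := (hq0.trans hq).le
  rw [peierls_factor_eq hα hp0]
  refine (sum_mul_pow_mul_one_sub_pow_le hq0 hq.le hq1 hp.le hrange fun m _ => hb n m).trans ?_
  have : 0 ≤ 1 - α / (1 + α) := by linarith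
  gcongr
  exact hsum n

open Finset in
/-- Core estimate of the Peierls argument: if `b n m = 0` for `m > α n` and the weighted
sums at `q = α/(1+α)` are bounded by `f n`, then the weighted sums at `p > q` gain at most
a factor `((1+α)^(1+α)/α^α · p^α (1-p))^n`. -/
theorem peierls_estimate (α : ℝ) (hα : 0 < α) (p : ℝ)
    (hq : α / (1 + α) < p) (hp : p < 1)
    (b : ℕ → ℕ → ℝ) (hb : ∀ n m, 0 ≤ b n m)
    (hb0 : ∀ n m : ℕ, α * n < m → b n m = 0)
    (f : ℕ → ℝ) (hf : ∀ n, 0 ≤ f n)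
    (hsum : ∀ n : ℕ,
      ∑ m ∈ Finset.range (Nat.floor (α * n) + 1),
        b n m * (α / (1 + α)) ^ m * (1 - α / (1 + α)) ^ n ≤ f n) :
    ∀ n : ℕ,
      ∑ m ∈ Finset.range (Nat.floor (α * n) + 1), b n m * p ^ m * (1 - p) ^ n ≤
        ((1 + α) ^ (1 + α) / α ^ α * (p ^ α * (1 - p))) ^ n * f n :=
  peierls_estimate_general α hα p hq hp b hb f hsum
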